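/- A formula φ is a theorem of the Hilbert system GLS if and only if the formula (⋀{□α→α : □α ∈ SF(φ)}) → φ, whose antecedent is the conjunction of all formulas □α→α with □α a subformula of φ, is a theorem of GL. -/

import Mathlib

/-- Modal formulas: propositional variables, ⊥, →, □. -/
inductive Formula : Type
  | var : ℕ → Formula
  | bot : Formula
  | imp : Formula → Formula → Formula
  | box : Formula → Formula
deriving DecidableEq

/-- Levels of sequents in GLS_seq: first level (⇒) and second level (⇛). -/
inductive SeqLevel : Type
  | one
  | two
deriving DecidableEq

/-- The set of subformulas of a formula. -/
def Formula.subf : Formula → Finset Formula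
  | .var p => {.var p}
  | .bot => {.bot}
  | .imp φ ψ => insert (.imp φ ψ) (φ.subf ∪ ψ.subf)
  | .box φ => insert (.box φ) φ.subf

/-- SF(Ψ,Φ): all subformulas of formulas in Ψ ∪ Φ. -/
def SF (Ψ Φ : Finset Formula) : Finset Formula := (Ψ ∪ Φ).biUnion Formula.subf

def Formula.isBox : Formula → Bool
  | .box _ => true
  | _ => false

def Formula.unbox : Formula → Formula
  | .box φ => φ
  | φ => φ

/-- Θ_□ = {φ : □φ ∈ Θ}. -/
def boxInv (Θ : Finset Formula) : Finset Formula :=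
  (Θ.filter fun ψ => ψ.isBox).image Formula.unbox

/-- The sequent calculus GLS_seq, on sequents of two levels.  The Bool parameter
records whether the cut rule may be used: `GLSSeq true` is provability in GLS_seq,
`GLSSeq false` is cut-free provability.  The first-level fragment is exactly GL_seq. -/
inductive GLSSeq : Bool → SeqLevel → Finset Formula → Finset Formula → Prop
  | init (c lv φ) : GLSSeq c lv {φ} {φ}
  | initBot (c lv) : GLSSeq c lv {Formula.bot} ∅
  | cut {lv Γ Δ} (φ) : GLSSeq true lv Γ (insert φ Δ) → GLSSeq true lv (insert φ Γ) Δ →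
      GLSSeq true lv Γ Δ
  | weak {c lv Γ Δ Γ' Δ'} : Γ ⊆ Γ' → Δ ⊆ Δ' → GLSSeq c lv Γ Δ → GLSSeq c lv Γ' Δ'
  | impL {c lv Γ Δ φ ψ} : GLSSeq c lv Γ (insert φ Δ) → GLSSeq c lv (insert ψ Γ) Δ →
      GLSSeq c lv (insert (.imp φ ψ) Γ) Δ
  | impR {c lv Γ Δ φ ψ} : GLSSeq c lv (insert φ Γ) (insert ψ Δ) →
      GLSSeq c lv Γ (insert (.imp φ ψ) Δ)
  | boxGL {c Γ φ} : GLSSeq c .one (Γ ∪ Γ.image .box ∪ {.box φ}) {φ} →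
      GLSSeq c .one (Γ.image .box) {.box φ}
  | boxL {c Γ Δ} (φ) : GLSSeq c .two (insert φ Γ) Δ → GLSSeq c .two (insert (.box φ) Γ) Δ
  | lift {c Γ Δ} : GLSSeq c .one Γ Δ → GLSSeq c .two Γ Δ

/-- The sequent calculus GL_seq (on first-level sequents only). -/
inductive GLSeq : Bool → Finset Formula → Finset Formula → Prop
  | init (c φ) : GLSeq c {φ} {φ}
  | initBot (c) : GLSeq c {Formula.bot} ∅
  | cut {Γ Δ} (φ) : GLSeq true Γ (insert φ Δ) → GLSeq true (insert φ Γ) Δ → GLSeq true Γ Δ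
  | weak {c Γ Δ Γ' Δ'} : Γ ⊆ Γ' → Δ ⊆ Δ' → GLSeq c Γ Δ → GLSeq c Γ' Δ'
  | impL {c Γ Δ φ ψ} : GLSeq c Γ (insert φ Δ) → GLSeq c (insert ψ Γ) Δ →
      GLSeq c (insert (.imp φ ψ) Γ) Δ
  | impR {c Γ Δ φ ψ} : GLSeq c (insert φ Γ) (insert ψ Δ) → GLSeq c Γ (insert (.imp φ ψ) Δ)
  | boxGL {c Γ φ} : GLSeq c (Γ ∪ Γ.image .box ∪ {.box φ}) {φ} → GLSeq c (Γ.image .box) {.box φ}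

/-- Proof trees of GLS_seq (cut included). -/
inductive GLSTree : SeqLevel → Finset Formula → Finset Formula → Type
  | init (lv φ) : GLSTree lv {φ} {φ}
  | initBot (lv) : GLSTree lv {Formula.bot} ∅
  | cut {lv Γ Δ} (φ) : GLSTree lv Γ (insert φ Δ) → GLSTree lv (insert φ Γ) Δ → GLSTree lv Γ Δ
  | weak {lv Γ Δ} (Γ' Δ' : Finset Formula) : Γ ⊆ Γ' → Δ ⊆ Δ' → GLSTree lv Γ Δ → GLSTree lv Γ' Δ'
  | impL {lv Γ Δ} (φ ψ) : GLSTree lv Γ (insert φ Δ) → GLSTree lv (insert ψ Γ) Δ →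
      GLSTree lv (insert (.imp φ ψ) Γ) Δ
  | impR {lv Γ Δ} (φ ψ) : GLSTree lv (insert φ Γ) (insert ψ Δ) → GLSTree lv Γ (insert (.imp φ ψ) Δ)
  | boxGL (Γ φ) : GLSTree .one (Γ ∪ Γ.image .box ∪ {.box φ}) {φ} → GLSTree .one (Γ.image .box) {.box φ}
  | boxL {Γ Δ} (φ) : GLSTree .two (insert φ Γ) Δ → GLSTree .two (insert (.box φ) Γ) Δ
  | lift {Γ Δ} : GLSTree .one Γ Δ → GLSTree .two Γ Δ

/-- The set of principal formulas of all (□L) rules occurring in a proof tree. -/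
def GLSTree.principals : ∀ {lv Γ Δ}, GLSTree lv Γ Δ → Finset Formula
  | _, _, _, .init _ _ => ∅
  | _, _, _, .initBot _ => ∅
  | _, _, _, .cut _ t₁ t₂ => t₁.principals ∪ t₂.principals
  | _, _, _, .weak _ _ _ _ t => t.principals
  | _, _, _, .impL _ _ t₁ t₂ => t₁.principals ∪ t₂.principals
  | _, _, _, .impR _ _ t => t.principals
  | _, _, _, .boxGL _ _ t => t.principals
  | _, _, _, .boxL φ t => insert (Formula.box φ) t.principals
  | _, _, _, .lift t => t.principals

/-- A proof tree bundled with its level and conclusion. -/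
abbrev PGLSTree : Type :=
  (lv : SeqLevel) × (Γ : Finset Formula) × (Δ : Finset Formula) × GLSTree lv Γ Δ

/-- The set of subproofs of a proof tree (including the tree itself). -/
def GLSTree.subproofs {lv Γ Δ} (t : GLSTree lv Γ Δ) : Set PGLSTree :=
  insert ⟨lv, Γ, Δ, t⟩ <|
    match lv, Γ, Δ, t with
    | _, _, _, .init _ _ => ∅
    | _, _, _, .initBot _ => ∅
    | _, _, _, .cut _ t₁ t₂ => t₁.subproofs ∪ t₂.subproofs
    | _, _, _, .weak _ _ _ _ t₁ => t₁.subproofs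
    | _, _, _, .impL _ _ t₁ t₂ => t₁.subproofs ∪ t₂.subproofs
    | _, _, _, .impR _ _ t₁ => t₁.subproofs
    | _, _, _, .boxGL _ _ t₁ => t₁.subproofs
    | _, _, _, .boxL _ t₁ => t₁.subproofs
    | _, _, _, .lift t₁ => t₁.subproofs

/-- Kripke satisfaction over a frame `R` with atomic valuation `v`. -/
def KSat {W : Type} (R : W → W → Prop) (v : W → ℕ → Prop) : Formula → W → Prop
  | .var p, w => v w p
  | .bot, _ => False
  | .imp φ ψ, w => KSat R v φ w → KSat R v ψ w
  | .box φ, w => ∀ w', R w w' → KSat R v φ w'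

/-- A GL-model: a nonempty, transitive, converse well-founded Kripke model. -/
structure GLModel where
  World : Type
  ne : Nonempty World
  R : World → World → Prop
  trans : Transitive R
  cwf : ∀ f : ℕ → World, ¬ ∀ i, R (f i) (f (i + 1))
  val : World → ℕ → Prop

/-- Truth of a formula at a world of a GL-model. -/
def GLModel.sat (M : GLModel) (w : M.World) (φ : Formula) : Prop := KSat M.R M.val φ w

/-- Truth of a sequent Γ ▸ Δ at a world: some γ ∈ Γ is false or some δ ∈ Δ is true. -/
def GLModel.seqTrue (M : GLModel) (w : M.World) (Γ Δ : Finset Formula) : Prop :=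
  (∃ γ ∈ Γ, ¬ M.sat w γ) ∨ (∃ δ ∈ Δ, M.sat w δ)

/-- w is Σ-reflexive: □α → α is true at w for every □α ∈ Σ. -/
def GLModel.reflexiveFor (M : GLModel) (w : M.World) (S : Finset Formula) : Prop :=
  ∀ α : Formula, Formula.box α ∈ S → M.sat w ((Formula.box α).imp α)

/-- Saturation conditions (→L), (→R) for first-level sequents. -/
def Saturated1 (Γ Δ : Finset Formula) : Prop :=
  (∀ φ ψ : Formula, φ.imp ψ ∈ Γ → φ ∈ Δ ∨ ψ ∈ Γ) ∧
  (∀ φ ψ : Formula, φ.imp ψ ∈ Δ → φ ∈ Γ ∧ ψ ∈ Δ)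

/-- Saturation for second-level sequents: additionally (□L). -/
def Saturated2 (Γ Δ : Finset Formula) : Prop :=
  Saturated1 Γ Δ ∧ ∀ φ : Formula, Formula.box φ ∈ Γ → φ ∈ Γ

def Saturated : SeqLevel → Finset Formula → Finset Formula → Prop
  | .one => Saturated1
  | .two => Saturated2

/-- The Hilbert system GL. -/
inductive GLHilbert : Formula → Prop
  | ax1 (φ ψ : Formula) : GLHilbert (φ.imp (ψ.imp φ))
  | ax2 (φ ψ χ : Formula) :
      GLHilbert ((φ.imp (ψ.imp χ)).imp ((φ.imp ψ).imp (φ.imp χ)))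
  | ax3 (φ : Formula) : GLHilbert (((φ.imp .bot).imp .bot).imp φ)
  | axK (φ ψ : Formula) :
      GLHilbert ((Formula.box (φ.imp ψ)).imp ((Formula.box φ).imp (Formula.box ψ)))
  | axLob (φ : Formula) :
      GLHilbert ((Formula.box ((Formula.box φ).imp φ)).imp (Formula.box φ))
  | mp {φ ψ} : GLHilbert (φ.imp ψ) → GLHilbert φ → GLHilbert ψ
  | nec {φ} : GLHilbert φ → GLHilbert (Formula.box φ)

/-- The Hilbert system GLS: theorems of GL and all □α → α, closed under modus ponens. -/
inductive GLSHilbert : Formula → Prop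
  | gl {φ} : GLHilbert φ → GLSHilbert φ
  | refl (α : Formula) : GLSHilbert ((Formula.box α).imp α)
  | mp {φ ψ} : GLSHilbert (φ.imp ψ) → GLSHilbert φ → GLSHilbert ψ

/-- Conjunction (encoded with → and ⊥) of a list of formulas; empty conjunction is ⊤. -/
def Formula.conj : List Formula → Formula
  | [] => Formula.bot.imp Formula.bot
  | φ :: l => ((φ.imp ((Formula.conj l).imp .bot)).imp .bot)

/-- Membership predicate for the canonical model: saturated first-level sequents over S
that are not cut-free provable in GLS_seq. -/
def W0pred (S : Finset Formula) (s : Finset Formula × Finset Formula) : Prop :=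
  Saturated1 s.1 s.2 ∧ ¬ GLSSeq false SeqLevel.one s.1 s.2 ∧ s.1 ∪ s.2 ⊆ S

/-- Worlds of the canonical model. -/
def W0 (S : Finset Formula) : Type := {s : Finset Formula × Finset Formula // W0pred S s}

/-- Accessibility of the canonical model: (Γ⇒Δ) R₀ (Γ'⇒Δ') iff Γ_□ ⊊ Γ'_□ and Γ_□ ⊆ Γ'. -/
def R0 (S : Finset Formula) (s t : W0 S) : Prop :=
  boxInv s.1.1 ⊂ boxInv t.1.1 ∧ boxInv s.1.1 ⊆ t.1.1

/-- Valuation of the canonical model: p is true at (Γ⇒Δ) iff p ∈ Γ. -/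
def V0 (S : Finset Formula) (s : W0 S) (p : ℕ) : Prop := Formula.var p ∈ s.1.1

/-- The extended set of worlds W = W₀ ∪ ℕ. -/
def Wext (S : Finset Formula) : Type := W0 S ⊕ ℕ

/-- The extended accessibility relation, with distinguished world `wp` in W₀. -/
def Rext (S : Finset Formula) (wp : W0 S) : Wext S → Wext S → Prop
  | Sum.inl x, Sum.inl y => R0 S x y
  | Sum.inr _, Sum.inl y => y = wp ∨ R0 S wp y
  | Sum.inr n, Sum.inr m => m < n
  | Sum.inl _, Sum.inr _ => False

/-- The extended valuation: worlds in ℕ behave like the distinguished world `wp`. -/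
def Vext (S : Finset Formula) (wp : W0 S) : Wext S → ℕ → Prop
  | Sum.inl x, p => V0 S x p
  | Sum.inr _, p => V0 S wp p

/-! Suppose GLS proves `φ`, yet by completeness of GL some GL-model has a world `w` at
which every `□α → α` with `□α ∈ SF(φ)` holds but `φ` fails. Glue in front of `w` an infinite
chain `… R 2 R 1 R 0` of copies of `w`, each seeing `w` and everything `w` sees; the
accessibility stays transitive and conversely well-founded. Because `w` is reflexive for the
boxed subformulas of `φ`, every chain world agrees with `w` on `SF(φ)`. On the other hand every
theorem of GLS holds at all chain worlds far enough out: truth of `□α` is antitone along the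
chain, so either `□α` holds at every chain world, and then so does `α` (world `n + 1` sees
world `n`), or `□α` fails from some point on. Hence `φ` holds at `w`. -/

open Formula

namespace Formula

def neg (φ : Formula) : Formula := φ.imp bot

def and (φ ψ : Formula) : Formula := (φ.imp ψ.neg).neg

theorem conj_cons (φ : Formula) (l : List Formula) : conj (φ :: l) = φ.and (conj l) := rfl

theorem mem_subf_self (φ : Formula) : φ ∈ φ.subf := by
  cases φ <;> simp [subf]

theorem subf_subset_of_mem {φ ψ : Formula} (h : ψ ∈ φ.subf) : ψ.subf ⊆ φ.subf := by
  induction φ with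
  | var | bot => simp_all [subf]
  | imp a b iha ihb =>
    simp only [subf, Finset.mem_insert, Finset.mem_union] at h
    rcases h with rfl | h | h
    · rfl
    · exact (iha h).trans (Finset.subset_union_left.trans (Finset.subset_insert _ _))
    · exact (ihb h).trans (Finset.subset_union_right.trans (Finset.subset_insert _ _))
  | box a ih =>
    simp only [subf, Finset.mem_insert] at h
    rcases h with rfl | h
    · rfl
    · exact (ih h).trans (Finset.subset_insert _ _)

end Formula

def SubfClosed (Φ : Finset Formula) : Prop := ∀ φ ∈ Φ, φ.subf ⊆ Φ

namespace SubfClosed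

variable {Φ : Finset Formula} {φ ψ : Formula}

theorem subf (φ : Formula) : SubfClosed φ.subf := fun _ => subf_subset_of_mem

theorem mem_of_box_mem (hΦ : SubfClosed Φ) (h : box φ ∈ Φ) : φ ∈ Φ :=
  hΦ _ h (by simp [Formula.subf, mem_subf_self])

theorem mem_of_imp_mem (hΦ : SubfClosed Φ) (h : φ.imp ψ ∈ Φ) : φ ∈ Φ ∧ ψ ∈ Φ :=
  ⟨hΦ _ h (by simp [Formula.subf, mem_subf_self]),
    hΦ _ h (by simp [Formula.subf, mem_subf_self])⟩

end SubfClosed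

theorem mem_boxInv {Θ : Finset Formula} {φ : Formula} : φ ∈ boxInv Θ ↔ box φ ∈ Θ := by
  constructor
  · intro h
    obtain ⟨ψ, hψ, rfl⟩ := Finset.mem_image.mp h
    obtain ⟨hψΘ, hψbox⟩ := Finset.mem_filter.mp hψ
    cases ψ <;> simp_all [isBox, unbox]
  · intro h
    exact Finset.mem_image.mpr ⟨box φ, Finset.mem_filter.mpr ⟨h, rfl⟩, rfl⟩

theorem boxInv_mono {Θ Θ' : Finset Formula} (h : Θ ⊆ Θ') : boxInv Θ ⊆ boxInv Θ' :=
  fun _ hφ => mem_boxInv.mpr (h (mem_boxInv.mp hφ))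

namespace GLHilbert

theorem imp_self (φ : Formula) : GLHilbert (φ.imp φ) :=
  ((ax2 φ (φ.imp φ) φ).mp (ax1 φ (φ.imp φ))).mp (ax1 φ φ)

theorem box_mono {φ ψ : Formula} (h : GLHilbert (φ.imp ψ)) :
    GLHilbert ((box φ).imp (box ψ)) :=
  (axK φ ψ).mp h.nec

end GLHilbert

/-- Derivability in GL from hypotheses, which may not be necessitated. -/
inductive GLDerivable (Γ : Finset Formula) : Formula → Prop
  | thm {φ} : GLHilbert φ → GLDerivable Γ φ
  | hyp {φ} : φ ∈ Γ → GLDerivable Γ φ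
  | mp {φ ψ} : GLDerivable Γ (φ.imp ψ) → GLDerivable Γ φ → GLDerivable Γ ψ

def Consistent (Γ : Finset Formula) : Prop := ¬ GLDerivable Γ bot

namespace GLDerivable

variable {Γ Δ : Finset Formula} {φ ψ : Formula}

theorem toGLHilbert (h : GLDerivable ∅ φ) : GLHilbert φ := by
  induction h with
  | thm h => exact h
  | hyp h => simp at h
  | mp _ _ ih₁ ih₂ => exact ih₁.mp ih₂

theorem of_forall_mem (hΓ : ∀ ψ ∈ Γ, GLDerivable Δ ψ) (h : GLDerivable Γ φ) :
    GLDerivable Δ φ := by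
  induction h with
  | thm h => exact thm h
  | hyp h => exact hΓ _ h
  | mp _ _ ih₁ ih₂ => exact mp ih₁ ih₂

theorem mono (hΓΔ : Γ ⊆ Δ) (h : GLDerivable Γ φ) : GLDerivable Δ φ :=
  h.of_forall_mem fun _ hψ => hyp (hΓΔ hψ)

theorem deduction (h : GLDerivable (insert ψ Γ) φ) : GLDerivable Γ (ψ.imp φ) := by
  induction h with
  | thm h => exact mp (thm (.ax1 _ _)) (thm h)
  | hyp h =>
    rcases Finset.mem_insert.mp h with rfl | h
    · exact thm (.imp_self _)
    · exact mp (thm (.ax1 _ _)) (hyp h)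
  | mp _ _ ih₁ ih₂ => exact mp (mp (thm (.ax2 _ _ _)) ih₁) ih₂

theorem by_contra (h : GLDerivable (insert φ.neg Γ) bot) : GLDerivable Γ φ :=
  mp (thm (.ax3 φ)) h.deduction

theorem exfalso (h : GLDerivable Γ bot) : GLDerivable Γ φ :=
  by_contra (h.mono (Finset.subset_insert _ _))

theorem absurd (h : φ ∈ Γ) (hneg : φ.neg ∈ Γ) : GLDerivable Γ ψ :=
  exfalso (mp (hyp hneg) (hyp h))

theorem box (h : GLDerivable Γ φ) : GLDerivable (Γ.image Formula.box) (Formula.box φ) := by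
  induction h with
  | thm h => exact thm h.nec
  | hyp h => exact hyp (Finset.mem_image_of_mem _ h)
  | mp _ _ ih₁ ih₂ => exact mp (mp (thm (.axK _ _)) ih₁) ih₂

end GLDerivable

namespace GLHilbert

theorem and_intro (φ ψ : Formula) : GLHilbert (φ.imp (ψ.imp (φ.and ψ))) := by
  refine (GLDerivable.deduction <| .deduction <| .deduction ?_).toGLHilbert
  exact .mp (φ := ψ) (.mp (φ := φ) (.hyp (by simp [neg])) (.hyp (by simp))) (.hyp (by simp))

theorem and_left (φ ψ : Formula) : GLHilbert ((φ.and ψ).imp φ) := by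
  refine (GLDerivable.deduction <| .by_contra ?_).toGLHilbert
  refine .mp (φ := φ.imp ψ.neg) (.hyp (by simp [Formula.and, neg])) (.deduction ?_)
  exact .absurd (φ := φ) (by simp) (by simp)

theorem and_right (φ ψ : Formula) : GLHilbert ((φ.and ψ).imp ψ) := by
  refine (GLDerivable.deduction <| .by_contra ?_).toGLHilbert
  refine .mp (φ := φ.imp ψ.neg) (.hyp (by simp [Formula.and, neg])) (.deduction (.deduction ?_))
  exact .absurd (φ := ψ) (by simp) (by simp)

/-- Axiom 4 follows from Löb's axiom applied to `φ ∧ □φ`. -/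
theorem box_box (φ : Formula) : GLHilbert ((box φ).imp (box (box φ))) := by
  set ψ := φ.and (box φ)
  have hrefl : GLDerivable {φ} ((box ψ).imp ψ) := by
    refine .deduction (.mp (.mp (.thm (and_intro φ (box φ))) (.hyp (by simp))) ?_)
    exact .mp (.thm (box_mono (and_left φ (box φ)))) (.hyp (Finset.mem_insert_self _ _))
  have hboxψ : GLDerivable {box φ} (box ψ) := .mp (.thm (axLob ψ)) (by simpa using hrefl.box)
  refine (GLDerivable.deduction ?_).toGLHilbert
  exact .mp (.thm (box_mono (and_right _ _))) (hboxψ.mono (by simp))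

end GLHilbert

theorem wellFounded_flip_iff_no_chain {α : Type*} {r : α → α → Prop} :
    WellFounded (flip r) ↔ ∀ f : ℕ → α, ¬ ∀ i, r (f i) (f (i + 1)) := by
  rw [wellFounded_iff_isEmpty_descending_chain, isEmpty_subtype]
  rfl

namespace GLModel

variable (M : GLModel) {w : M.World} {φ ψ : Formula}

@[simp] theorem sat_imp : M.sat w (φ.imp ψ) ↔ (M.sat w φ → M.sat w ψ) := Iff.rfl

@[simp] theorem sat_box : M.sat w (box φ) ↔ ∀ v, M.R w v → M.sat v φ := Iff.rfl

@[simp] theorem not_sat_bot : ¬ M.sat w bot := id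

theorem sat_and : M.sat w (φ.and ψ) ↔ M.sat w φ ∧ M.sat w ψ := by
  simp only [Formula.and, neg, sat_imp, not_sat_bot]
  tauto

theorem sat_conj {l : List Formula} : M.sat w (conj l) ↔ ∀ ψ ∈ l, M.sat w ψ := by
  induction l with
  | nil => simp [conj]
  | cons φ l ih => simp [conj_cons, sat_and, ih]

theorem wellFounded_flip : WellFounded (flip M.R) :=
  wellFounded_flip_iff_no_chain.mpr M.cwf

theorem sat_lob (w : M.World) (φ : Formula) :
    M.sat w ((box ((box φ).imp φ)).imp (box φ)) := by
  intro hlob v hwv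
  induction v using M.wellFounded_flip.induction with
  | _ v ih => exact hlob v hwv fun u hvu => ih u hvu (M.trans hwv hvu)

end GLModel

theorem GLHilbert.sound {φ : Formula} (h : GLHilbert φ) (M : GLModel) (w : M.World) :
    M.sat w φ := by
  induction h generalizing w with
  | ax1 | ax2 | axK => simp_all
  | ax3 => simp only [GLModel.sat_imp, GLModel.not_sat_bot]; tauto
  | axLob φ => exact M.sat_lob w φ
  | mp _ _ ih₁ ih₂ => exact ih₁ w (ih₂ w)
  | nec _ ih => exact fun v _ => ih v

def diagram (Φ X : Finset Formula) : Finset Formula := X ∪ (Φ \ X).image neg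

theorem mem_diagram_of_mem {Φ X : Finset Formula} {φ : Formula} (h : φ ∈ X) :
    φ ∈ diagram Φ X :=
  Finset.mem_union_left _ h

theorem neg_mem_diagram {Φ X : Finset Formula} {φ : Formula} (hΦ : φ ∈ Φ) (hX : φ ∉ X) :
    φ.neg ∈ diagram Φ X :=
  Finset.mem_union_right _ (Finset.mem_image_of_mem _ (Finset.mem_sdiff.mpr ⟨hΦ, hX⟩))

theorem Consistent.insert_or_insert_neg {C : Finset Formula} (hC : Consistent C) (φ : Formula) :
    Consistent (insert φ C) ∨ Consistent (insert φ.neg C) := by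
  by_contra! h
  simp only [Consistent, not_not] at h
  exact hC (.mp h.1.deduction h.2.by_contra)

theorem exists_consistent_union_diagram (Φ : Finset Formula) {C : Finset Formula}
    (hC : Consistent C) : ∃ X ⊆ Φ, Consistent (C ∪ diagram Φ X) := by
  induction Φ using Finset.induction_on generalizing C with
  | empty => exact ⟨∅, subset_rfl, by simpa [diagram] using hC⟩
  | insert φ Φ _ ih =>
    rcases hC.insert_or_insert_neg φ with hφ | hφ
    · obtain ⟨X, hXΦ, hX⟩ := ih hφ
      refine ⟨insert φ X, Finset.insert_subset_insert φ hXΦ, fun h => hX (h.mono ?_)⟩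
      intro ψ
      simp only [diagram, Finset.mem_union, Finset.mem_insert, Finset.mem_image, Finset.mem_sdiff]
      grind
    · obtain ⟨X, hXΦ, hX⟩ := ih hφ
      refine ⟨X, hXΦ.trans (Finset.subset_insert φ Φ), fun h => hX (h.mono ?_)⟩
      intro ψ
      simp only [diagram, Finset.mem_union, Finset.mem_insert, Finset.mem_image, Finset.mem_sdiff]
      grind

def CanonicalWorld (Φ : Finset Formula) : Type :=
  {X : Finset Formula // X ⊆ Φ ∧ Consistent (diagram Φ X)}

namespace CanonicalWorld

variable {Φ : Finset Formula}

theorem mem_of_derivable (X : CanonicalWorld Φ) {φ : Formula} (hφ : φ ∈ Φ)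
    (h : GLDerivable (diagram Φ X.1) φ) : φ ∈ X.1 := by
  by_contra hφX
  exact X.2.2 (.mp (.hyp (neg_mem_diagram hφ hφX)) h)

def Rel (X Y : CanonicalWorld Φ) : Prop := boxInv X.1 ⊂ boxInv Y.1 ∧ boxInv X.1 ⊆ Y.1

theorem wellFounded_flip_rel : WellFounded (flip (Rel (Φ := Φ))) := by
  refine Subrelation.wf (r := InvImage (· < ·) fun X : CanonicalWorld Φ =>
    (boxInv Φ).card - (boxInv X.1).card) ?_ (InvImage.wf _ wellFounded_lt)
  intro Y X hXY
  have := Finset.card_lt_card hXY.1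
  have := Finset.card_le_card (boxInv_mono Y.2.1)
  simp only [InvImage]
  omega

/-- The diagram of `X` derives `□β` and `□□β` for each `□β ∈ X`, so by Löb it derives
`□α` as soon as these hypotheses together with the `β`s derive `□α → α`. -/
theorem exists_rel_not_mem (hΦ : SubfClosed Φ) (X : CanonicalWorld Φ) {α : Formula}
    (hα : box α ∈ Φ) (hαX : box α ∉ X.1) : ∃ Y, Rel X Y ∧ α ∉ Y.1 := by
  set S := boxInv X.1 ∪ (boxInv X.1).image box
  set C := insert α.neg (insert (box α) S)
  have hS : ∀ ψ ∈ S.image box, GLDerivable (diagram Φ X.1) ψ := by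
    simp only [S, Finset.image_union, Finset.mem_union, Finset.mem_image]
    rintro _ (⟨β, hβ, rfl⟩ | ⟨_, ⟨β, hβ, rfl⟩, rfl⟩)
    · exact .hyp (mem_diagram_of_mem (mem_boxInv.mp hβ))
    · exact .mp (.thm (.box_box β)) (.hyp (mem_diagram_of_mem (mem_boxInv.mp hβ)))
  have hC : Consistent C := by
    intro h
    have hlob : GLDerivable (S.image box) (box α) :=
      .mp (.thm (.axLob α)) h.by_contra.deduction.box
    exact hαX (X.mem_of_derivable hα (hlob.of_forall_mem hS))
  obtain ⟨Y, hYΦ, hY⟩ := exists_consistent_union_diagram Φ hC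
  have hmemY : ∀ ψ ∈ C, ψ ∈ Φ → ψ ∈ Y := fun ψ hψC hψΦ => by
    by_contra hψY
    exact hY (.absurd (Finset.mem_union_left _ hψC)
      (Finset.mem_union_right _ (neg_mem_diagram hψΦ hψY)))
  have hboxInv : boxInv X.1 ⊆ boxInv Y :=
    fun β hβ => mem_boxInv.mpr (hmemY _ (by simp [C, S, hβ]) (X.2.1 (mem_boxInv.mp hβ)))
  refine ⟨⟨Y, hYΦ, fun h => hY (h.mono Finset.subset_union_right)⟩, ⟨?_, ?_⟩, ?_⟩
  · refine (Finset.ssubset_iff_of_subset hboxInv).mpr ⟨α, ?_, fun h => hαX (mem_boxInv.mp h)⟩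
    exact mem_boxInv.mpr (hmemY _ (by simp [C]) hα)
  · intro β hβ
    exact hmemY _ (by simp [C, S, hβ]) (hΦ.mem_of_box_mem (X.2.1 (mem_boxInv.mp hβ)))
  · intro hαY
    exact hY (.absurd (Finset.mem_union_right _ (mem_diagram_of_mem hαY))
      (Finset.mem_union_left _ (Finset.mem_insert_self _ _)))

end CanonicalWorld

abbrev canonicalModel (Φ : Finset Formula) (X₀ : CanonicalWorld Φ) : GLModel where
  World := CanonicalWorld Φ
  ne := ⟨X₀⟩
  R := CanonicalWorld.Rel
  trans _ _ _ hXY hYZ := ⟨hXY.1.trans hYZ.1, hXY.1.subset.trans hYZ.2⟩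
  cwf := wellFounded_flip_iff_no_chain.mp CanonicalWorld.wellFounded_flip_rel
  val X p := var p ∈ X.1

theorem canonicalModel_sat_iff {Φ : Finset Formula} (hΦ : SubfClosed Φ)
    (X₀ : CanonicalWorld Φ) {φ : Formula} (hφ : φ ∈ Φ) (X : CanonicalWorld Φ) :
    (canonicalModel Φ X₀).sat X φ ↔ φ ∈ X.1 := by
  induction φ generalizing X with
  | var p => rfl
  | bot =>
    simp only [GLModel.not_sat_bot, false_iff]
    exact fun h => X.2.2 (.hyp (mem_diagram_of_mem h))
  | imp a b iha ihb =>
    obtain ⟨ha, hb⟩ := hΦ.mem_of_imp_mem hφ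
    rw [GLModel.sat_imp, iha ha, ihb hb]
    constructor
    · intro hab
      refine X.mem_of_derivable hφ ?_
      by_cases haX : a ∈ X.1
      · exact .mp (.thm (.ax1 b a)) (.hyp (mem_diagram_of_mem (hab haX)))
      · exact .deduction (.absurd (Finset.mem_insert_self _ _)
          (Finset.mem_insert_of_mem (neg_mem_diagram ha haX)))
    · intro habX haX
      exact X.mem_of_derivable hb
        (.mp (.hyp (mem_diagram_of_mem habX)) (.hyp (mem_diagram_of_mem haX)))
  | box α ih =>
    have hα : α ∈ Φ := hΦ.mem_of_box_mem hφ
    rw [GLModel.sat_box]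
    constructor
    · intro h
      by_contra hαX
      obtain ⟨Y, hXY, hαY⟩ := X.exists_rel_not_mem hΦ hφ hαX
      exact hαY ((ih hα Y).mp (h Y hXY))
    · exact fun h Y hXY => (ih hα Y).mpr (hXY.2 (mem_boxInv.mpr h))

theorem GLHilbert.of_forall_sat {φ : Formula} (h : ∀ (M : GLModel) (w : M.World), M.sat w φ) :
    GLHilbert φ := by
  by_contra hφ
  have hneg : Consistent {φ.neg} :=
    fun hbot => hφ (GLDerivable.by_contra (Γ := ∅) (hbot.mono (by simp))).toGLHilbert
  obtain ⟨X, hXΦ, hX⟩ := exists_consistent_union_diagram φ.subf hneg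
  let X₀ : CanonicalWorld φ.subf := ⟨X, hXΦ, fun h => hX (h.mono Finset.subset_union_right)⟩
  have hφX : φ ∉ X := fun hφX =>
    hX (.absurd (Finset.mem_union_right _ (mem_diagram_of_mem hφX))
      (Finset.mem_union_left _ (Finset.mem_singleton_self _)))
  exact hφX ((canonicalModel_sat_iff (.subf φ) X₀ (mem_subf_self φ) X₀).mp
    (h (canonicalModel φ.subf X₀) X₀))

namespace GLModel

variable (M : GLModel) (w : M.World)

def chainRel : M.World ⊕ ℕ → M.World ⊕ ℕ → Prop
  | .inl x, .inl y => M.R x y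
  | .inr _, .inl y => y = w ∨ M.R w y
  | .inr n, .inr m => m < n
  | .inl _, .inr _ => False

abbrev prependChain : GLModel where
  World := M.World ⊕ ℕ
  ne := ⟨.inr 0⟩
  R := M.chainRel w
  trans := by
    rintro (x | n) (y | m) (z | k) hxy hyz <;> simp only [chainRel] at hxy hyz ⊢
    · exact M.trans hxy hyz
    · rcases hxy with rfl | hwy
      · exact .inr hyz
      · exact .inr (M.trans hwy hyz)
    · exact hyz
    · omega
  cwf := by
    refine wellFounded_flip_iff_no_chain.mp (Subrelation.wf ?_
      (Sum.lex_wf M.wellFounded_flip wellFounded_lt))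
    rintro (x | n) (y | m) h <;> simp_all [chainRel, flip]
  val
    | .inl x => M.val x
    | .inr _ => M.val w

variable {M w}

theorem prependChain_sat_inl {x : M.World} {φ : Formula} :
    (M.prependChain w).sat (.inl x) φ ↔ M.sat x φ := by
  induction φ generalizing x with
  | var | bot => rfl
  | imp a b iha ihb => simp only [sat_imp, iha, ihb]
  | box a ih =>
    simp only [sat_box]
    constructor
    · exact fun h y hxy => ih.mp (h (.inl y) hxy)
    · rintro h (y | n) hxy
      · exact ih.mpr (h y hxy)
      · exact hxy.elim

theorem antitone_prependChain_sat_box (α : Formula) :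
    Antitone fun n => (M.prependChain w).sat (.inr n) (box α) := by
  rintro n m hnm h (y | k) hny
  · exact h (.inl y) hny
  · exact h (.inr k) (lt_of_lt_of_le hny hnm)

theorem eventually_prependChain_sat {φ : Formula} (h : GLSHilbert φ) :
    ∀ᶠ n in Filter.atTop, (M.prependChain w).sat (.inr n) φ := by
  induction h with
  | gl h => exact .of_forall fun n => h.sound _ _
  | refl α =>
    by_cases hbox : ∀ n, (M.prependChain w).sat (.inr n) (box α)
    · exact .of_forall fun n _ => hbox (n + 1) (.inr n) (Nat.lt_succ_self n)
    · obtain ⟨N, hN⟩ := not_forall.mp hbox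
      exact Filter.eventually_atTop.mpr
        ⟨N, fun n hn hαn => (hN (antitone_prependChain_sat_box α hn hαn)).elim⟩
  | mp _ _ ih₁ ih₂ => exact (ih₁.and ih₂).mono fun n h => h.1 h.2

theorem prependChain_sat_inr_iff {Φ : Finset Formula} (hΦ : SubfClosed Φ)
    (hw : M.reflexiveFor w Φ) {ψ : Formula} (hψ : ψ ∈ Φ) (n : ℕ) :
    (M.prependChain w).sat (.inr n) ψ ↔ M.sat w ψ := by
  induction ψ generalizing n with
  | var | bot => rfl
  | imp a b iha ihb =>
    obtain ⟨ha, hb⟩ := hΦ.mem_of_imp_mem hψ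
    simp only [sat_imp, iha ha, ihb hb]
  | box α ih =>
    have hα : α ∈ Φ := hΦ.mem_of_box_mem hψ
    simp only [sat_box]
    constructor
    · exact fun h y hwy => prependChain_sat_inl.mp (h (.inl y) (.inr hwy))
    · rintro h (y | m) hny
      · rcases hny with rfl | hwy
        · exact prependChain_sat_inl.mpr (hw α hψ h)
        · exact prependChain_sat_inl.mpr (h y hwy)
      · exact (ih hα m).mpr (hw α hψ h)

theorem sat_of_glsHilbert {φ : Formula} (h : GLSHilbert φ) (hw : M.reflexiveFor w φ.subf) :
    M.sat w φ := by
  obtain ⟨n, hn⟩ := (eventually_prependChain_sat h).exists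
  exact (prependChain_sat_inr_iff (.subf φ) hw (mem_subf_self φ) n).mp hn

end GLModel

theorem GLSHilbert.conj {l : List Formula} (h : ∀ φ ∈ l, GLSHilbert φ) :
    GLSHilbert (Formula.conj l) := by
  induction l with
  | nil => exact .gl (.imp_self bot)
  | cons φ l ih =>
    exact .mp (.mp (.gl (.and_intro _ _)) (h φ (by simp))) (ih fun ψ hψ => h ψ (by simp [hψ]))

/-- φ is a theorem of GLS iff (⋀{□α→α : □α ∈ SF(φ)}) → φ is a theorem of GL,
where the antecedent is the conjunction of all □α → α with □α a subformula of φ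
(given by any list enumerating exactly these formulas). -/
theorem glsHilbert_iff_glHilbert_reflexive_antecedent (φ : Formula) (l : List Formula)
    (hl : ∀ ψ : Formula, ψ ∈ l ↔ ∃ α : Formula,
        Formula.box α ∈ φ.subf ∧ ψ = (Formula.box α).imp α) :
    GLSHilbert φ ↔ GLHilbert ((Formula.conj l).imp φ) := by
  constructor
  · intro h
    refine .of_forall_sat fun M w hconj => M.sat_of_glsHilbert h fun α hα => ?_
    exact M.sat_conj.mp hconj _ ((hl _).mpr ⟨α, hα, rfl⟩)
  · intro h
    refine (GLSHilbert.gl h).mp (.conj fun ψ hψ => ?_)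
    obtain ⟨α, -, rfl⟩ := (hl ψ).mp hψ
    exact .refl α
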